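/- arXiv:math/0206064 — 2 statements merged into one kernel-verified Lean document; each statement's English description precedes it below -/
import Mathlib

section
/- Let dim H = 3. If ω ∈ S²H*⊗Λ²V* is nondegenerate of rank 8, then every σ ∈ Λ²H⊗S²V with σ̃∘ω̃ = 0 satisfies σ = 0. (This is the transcription of the smoothness part of the paper's unified proof of the Ellingsrud–Strømme theorem: H²(S²E) = 0 for every mathematical 3-instanton bundle E, so MI(3) is smooth.) -/
/-!
Both `ω̃` and `σ̃` are skew-adjoint (`ω` is symmetric in `H` and alternating in `V`, `σ` the other
way round), so transposing `σ̃ ∘ ω̃ = 0` gives `ω̃ ∘ σ̃ = 0`. Hence it suffices to show that a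
nonzero `σ` maps some `ξ ⊗ z` to a nonzero decomposable tensor `h ⊗ v`, since `ω̃ (h ⊗ v) = 0`
contradicts nondegeneracy.

In coordinates on `H*`, an alternating form on a 3-dimensional space factors through the cross
product: `σ(ξ, ξ') = Q (c ⨯₃ c')` for a linear family `Q` of symmetric forms on `V*`. Restricted
to a complement of the common kernel of the `Q x`, they land in the annihilator of that kernel, a
space of the same dimension, so over an algebraically closed field some nonzero `Q d` kills a
vector `z` outside the common kernel. Choosing `a` with `Q a z ≠ 0`, the identity
`(d ⨯₃ a) ⨯₃ c' = (d ⬝ᵥ c') • a - (a ⬝ᵥ c') • d` shows that `σ̃ ((d ⨯₃ a) ⊗ z) = d ⊗ Q a z`.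
-/

open TensorProduct Module Matrix

section Pencil

variable {k X Z : Type*} [Field k] [IsAlgClosed k] [AddCommGroup X] [Module k X]
  [AddCommGroup Z] [Module k Z] [FiniteDimensional k X] [FiniteDimensional k Z]

theorem exists_smul_add_smul_apply_eq_zero [Nontrivial X] (hXZ : finrank k X = finrank k Z)
    (f g : X →ₗ[k] Z) : ∃ s t : k, (s ≠ 0 ∨ t ≠ 0) ∧ ∃ x ≠ 0, s • f x + t • g x = 0 := by
  by_cases hg : Function.Injective g
  · -- an eigenvector `x` of `g⁻¹ ∘ f` satisfies `f x = μ • g x`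
    let e := g.linearEquivOfInjective hg hXZ
    obtain ⟨μ, hμ⟩ := Module.End.exists_eigenvalue (e.symm.toLinearMap ∘ₗ f)
    obtain ⟨x, hx, hx0⟩ := hμ.exists_hasEigenvector
    have hfx : f x = μ • g x := by
      simpa [e] using congrArg e (Module.End.mem_eigenspace_iff.mp hx)
    exact ⟨1, -μ, Or.inl one_ne_zero, x, hx0, by rw [hfx]; module⟩
  · obtain ⟨x, hx, hx0⟩ : ∃ x, g x = 0 ∧ x ≠ 0 := by
      simpa [injective_iff_map_eq_zero, not_forall] using hg
    exact ⟨0, 1, Or.inr one_ne_zero, x, hx0, by simp [hx]⟩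

end Pencil

theorem exists_apply_eq_zero_and_apply_ne_zero_of_symm {k E Y : Type*} [Field k] [IsAlgClosed k]
    [AddCommGroup E] [Module k E] [AddCommGroup Y] [Module k Y] [FiniteDimensional k Y]
    (U : E →ₗ[k] Y →ₗ[k] Y →ₗ[k] k) (hU : ∀ x z z', U x z z' = U x z' z) (hU0 : U ≠ 0)
    {e₀ e₁ : E} (he : LinearIndependent k ![e₀, e₁]) :
    ∃ z d, d ≠ 0 ∧ U d z = 0 ∧ ∃ a, U a z ≠ 0 := by
  set N := LinearMap.ker U.flip
  have hN : ∀ z, z ∈ N ↔ ∀ x, U x z = 0 := fun z => by simp [N, LinearMap.ext_iff]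
  have hrange : ∀ x z, U x z ∈ N.dualAnnihilator := fun x z => by
    rw [Submodule.mem_dualAnnihilator]
    intro n hn
    rw [hU, (hN n).mp hn x, LinearMap.zero_apply]
  obtain ⟨C, hC⟩ := N.exists_isCompl
  have hdim : finrank k C = finrank k N.dualAnnihilator := by
    have := Submodule.finrank_add_eq_of_isCompl hC
    have := Subspace.finrank_add_finrank_dualAnnihilator_eq N
    omega
  have : Nontrivial C := by
    refine Submodule.nontrivial_iff_ne_bot.mpr fun hC0 => hU0 ?_
    have hNtop : N = ⊤ := eq_top_of_isCompl_bot (hC0 ▸ hC)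
    ext x z
    exact LinearMap.congr_fun ((hN z).mp (hNtop ▸ Submodule.mem_top) x) _
  let res (x : E) : C →ₗ[k] N.dualAnnihilator :=
    ((U x).codRestrict N.dualAnnihilator (hrange x)).domRestrict C
  obtain ⟨s, t, hst, z, hz, hzero⟩ := exists_smul_add_smul_apply_eq_zero
    (X := C) (Z := N.dualAnnihilator) hdim (res e₀) (res e₁)
  refine ⟨z, s • e₀ + t • e₁, fun h => ?_, ?_, ?_⟩
  · have := LinearIndependent.pair_iff.mp he s t h
    tauto
  · simpa [res, Subtype.ext_iff] using hzero
  · by_contra! hall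
    have hzN : (z : Y) ∈ N := (hN z).mpr hall
    exact hz (Subtype.ext (Submodule.disjoint_def.mp hC.disjoint.symm z z.2 hzN))

section CrossProduct

variable {R N : Type*} [CommRing R] [AddCommGroup N] [Module R N]

def crossLift (β : (Fin 3 → R) →ₗ[R] (Fin 3 → R) →ₗ[R] N) : (Fin 3 → R) →ₗ[R] N :=
  Fintype.linearCombination R ![β (Pi.single 1 1) (Pi.single 2 1),
    β (Pi.single 2 1) (Pi.single 0 1), β (Pi.single 0 1) (Pi.single 1 1)]

theorem vec3_eq_sum_smul_single (x : Fin 3 → R) :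
    x = x 0 • Pi.single 0 1 + x 1 • Pi.single 1 1 + x 2 • Pi.single 2 1 := by
  ext i; fin_cases i <;> simp

theorem crossLift_cross {β : (Fin 3 → R) →ₗ[R] (Fin 3 → R) →ₗ[R] N} (hβ : β.IsAlt)
    (x y : Fin 3 → R) : crossLift β (x ⨯₃ y) = β x y := by
  conv_rhs => rw [vec3_eq_sum_smul_single x, vec3_eq_sum_smul_single y]
  simp only [map_add, map_smul, LinearMap.add_apply, LinearMap.smul_apply, hβ.self_eq_zero,
    ← hβ.neg (Pi.single 0 1) (Pi.single 1 1), ← hβ.neg (Pi.single 1 1) (Pi.single 2 1),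
    ← hβ.neg (Pi.single 2 1) (Pi.single 0 1), crossLift, Fintype.linearCombination_apply,
    Fin.sum_univ_three, cross_apply, Fin.isValue, cons_val_zero, cons_val_one, cons_val,
    smul_zero, smul_neg, zero_add, add_zero]
  module

theorem map_cross_cross_eq_dotProduct_smul {M : Type*} [AddCommGroup M] [Module R M]
    (T : (Fin 3 → R) →ₗ[R] M) {d : Fin 3 → R} (hd : T d = 0) (a c : Fin 3 → R) :
    T (d ⨯₃ a ⨯₃ c) = (d ⬝ᵥ c) • T a := by
  rw [cross_cross_eq_smul_sub_smul, map_sub, map_smul, map_smul, hd, smul_zero, sub_zero]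

end CrossProduct

theorem exists_contraction_eq_mul_of_finrank_eq_three {k X Y : Type*} [Field k] [IsAlgClosed k]
    [AddCommGroup X] [Module k X] [AddCommGroup Y] [Module k Y] [FiniteDimensional k X]
    [FiniteDimensional k Y] (hX : finrank k X = 3) (ψ : X →ₗ[k] X →ₗ[k] Y →ₗ[k] Y →ₗ[k] k)
    (hψalt : ψ.IsAlt) (hψsymm : ∀ ξ ξ' z z', ψ ξ ξ' z z' = ψ ξ ξ' z' z) (hψ : ψ ≠ 0) :
    ∃ (ξ : X) (z : Y) (t : Dual k X) (b : Dual k Y), t ≠ 0 ∧ b ≠ 0 ∧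
      ∀ ξ' z', ψ ξ ξ' z z' = t ξ' * b z' := by
  let e : (Fin 3 → k) ≃ₗ[k] X := (finBasisOfFinrankEq k X hX).equivFun.symm
  let β : (Fin 3 → k) →ₗ[k] (Fin 3 → k) →ₗ[k] Y →ₗ[k] Y →ₗ[k] k :=
    ψ.compl₁₂ (e : (Fin 3 → k) →ₗ[k] X) (e : (Fin 3 → k) →ₗ[k] X)
  let U := crossLift (R := k) (N := Y →ₗ[k] Y →ₗ[k] k) β
  have hβ : β.IsAlt := fun x => hψalt (e x)
  have hψU : ∀ x y, ψ (e x) (e y) = U (x ⨯₃ y) := fun x y => by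
    rw [crossLift_cross hβ]; rfl
  have hUsymm : ∀ x z z', U x z z' = U x z' z := fun x z z' => by
    simp [U, crossLift, Fintype.linearCombination_apply, Fin.sum_univ_three, β, hψsymm _ _ z]
  have hU0 : U ≠ 0 := by
    intro hU
    apply hψ
    ext ξ ξ' : 2
    rw [← e.apply_symm_apply ξ, ← e.apply_symm_apply ξ', hψU, hU]
    rfl
  have hsingle : LinearIndependent k ![(Pi.single 0 1 : Fin 3 → k), Pi.single 1 1] :=
    LinearIndependent.pair_iff.mpr fun s t h =>
      ⟨by simpa using congrFun h 0, by simpa using congrFun h 1⟩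
  obtain ⟨z, d, hd, hdz, a, ha⟩ :=
    exists_apply_eq_zero_and_apply_ne_zero_of_symm U hUsymm hU0 hsingle
  refine ⟨e (d ⨯₃ a), z, e.symm.dualMap (dotProductEquiv k (Fin 3) d), U a z,
    ((dotProductEquiv k (Fin 3)).trans e.symm.dualMap).map_ne_zero_iff.mpr hd, ha,
    fun ξ' z' => ?_⟩
  calc ψ (e (d ⨯₃ a)) ξ' z z' = U.flip z (d ⨯₃ a ⨯₃ e.symm ξ') z' := by
        rw [← e.apply_symm_apply ξ', hψU, e.symm_apply_apply]; rfl
    _ = _ := by rw [map_cross_cross_eq_dotProduct_smul (U.flip z) hdz]; rfl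

theorem TensorProduct.apply_swap_eq_neg_of_tmul {R M N P : Type*} [CommRing R]
    [AddCommGroup M] [Module R M] [AddCommGroup N] [Module R N] [AddCommGroup P] [Module R P]
    {B : M ⊗[R] N →ₗ[R] M ⊗[R] N →ₗ[R] P}
    (hB : ∀ m n m' n', B (m' ⊗ₜ n') (m ⊗ₜ n) = -B (m ⊗ₜ n) (m' ⊗ₜ n'))
    (x y : M ⊗[R] N) : B y x = -B x y := by
  have : B.flip = -B :=
    TensorProduct.ext' fun m n => TensorProduct.ext' fun m' n' => hB m n m' n'
  exact LinearMap.congr_fun (LinearMap.congr_fun this x) y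

section TensorProduct

variable {R M N : Type*} [CommRing R] [AddCommGroup M] [Module R M] [AddCommGroup N] [Module R N]
  [Module.Free R M] [Module.Finite R M] [Module.Free R N] [Module.Finite R N]

theorem TensorProduct.dualDistrib_surjective : Function.Surjective (dualDistrib R M N) :=
  (dualDistribEquiv R M N).surjective

theorem TensorProduct.ext_of_dualDistrib_tmul {x y : M ⊗[R] N}
    (h : ∀ f g, dualDistrib R M N (f ⊗ₜ g) x = dualDistrib R M N (f ⊗ₜ g) y) : x = y := by
  rw [← sub_eq_zero, ← forall_dual_apply_eq_zero_iff R]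
  intro φ
  obtain ⟨F, rfl⟩ := TensorProduct.dualDistrib_surjective φ
  have : Dual.eval R _ x ∘ₗ dualDistrib R M N = Dual.eval R _ y ∘ₗ dualDistrib R M N :=
    TensorProduct.ext' h
  simpa [sub_eq_zero] using LinearMap.congr_fun this F

theorem TensorProduct.dual_apply_swap_eq_neg_of_tmul {S : Dual R (M ⊗[R] N) →ₗ[R] M ⊗[R] N}
    (hS : ∀ f g f' g', dualDistrib R M N (f ⊗ₜ g) (S (dualDistrib R M N (f' ⊗ₜ g'))) =
      -dualDistrib R M N (f' ⊗ₜ g') (S (dualDistrib R M N (f ⊗ₜ g))))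
    (φ φ' : Dual R (M ⊗[R] N)) : φ' (S φ) = -φ (S φ') := by
  obtain ⟨F, rfl⟩ := TensorProduct.dualDistrib_surjective φ
  obtain ⟨F', rfl⟩ := TensorProduct.dualDistrib_surjective φ'
  exact TensorProduct.apply_swap_eq_neg_of_tmul
    (B := (dualDistrib R M N).compl₂ (S ∘ₗ dualDistrib R M N))
    (fun m n m' n' => hS m' n' m n) F F'

end TensorProduct

theorem LinearMap.comp_eq_zero_of_skew {k M : Type*} [CommRing k] [AddCommGroup M] [Module k M]
    {W : M →ₗ[k] Dual k M} {S : Dual k M →ₗ[k] M} (hW : ∀ x y, W y x = -W x y)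
    (hS : ∀ f g : Dual k M, g (S f) = -f (S g)) (h : S ∘ₗ W = 0) : W ∘ₗ S = 0 := by
  ext f y
  have hSW : S (W y) = 0 := LinearMap.congr_fun h y
  rw [LinearMap.comp_apply, hW, hS, hSW, map_zero, neg_neg, LinearMap.zero_apply,
    LinearMap.zero_apply]

theorem statement12_general
    (k : Type) [Field k] [IsAlgClosed k]
    (V H : Type) [AddCommGroup V] [Module k V] [AddCommGroup H] [Module k H]
    [FiniteDimensional k V] [FiniteDimensional k H]
    (hH : finrank k H = 3)
    (φ : H →ₗ[k] H →ₗ[k] V →ₗ[k] V →ₗ[k] k)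
    (hφsymm : ∀ h h' : H, φ h h' = φ h' h)
    (hφalt : ∀ (h h' : H) (v : V), φ h h' v v = 0)
    (W : H ⊗[k] V →ₗ[k] Dual k (H ⊗[k] V))
    (hW : ∀ (h h' : H) (v v' : V), W (h ⊗ₜ v) (h' ⊗ₜ v') = φ h h' v v')
    (hnd : ∀ h : H, h ≠ 0 → ∀ v : V, v ≠ 0 → W (h ⊗ₜ[k] v) ≠ 0)
    (ψ : Dual k H →ₗ[k] Dual k H →ₗ[k] Dual k V →ₗ[k] Dual k V →ₗ[k] k)
    (hψalt : ∀ ξ : Dual k H, ψ ξ ξ = 0)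
    (hψsymm : ∀ (ξ ξ' : Dual k H) (z z' : Dual k V), ψ ξ ξ' z z' = ψ ξ ξ' z' z)
    (S : Dual k (H ⊗[k] V) →ₗ[k] H ⊗[k] V)
    (hS : ∀ (ξ ξ' : Dual k H) (z z' : Dual k V),
      dualDistrib k H V (ξ' ⊗ₜ z') (S (dualDistrib k H V (ξ ⊗ₜ z))) = ψ ξ ξ' z z')
    (hcomp : S ∘ₗ W = 0) :
    ψ = 0 := by
  have hψskew : ∀ ξ ξ' z z', ψ ξ' ξ z z' = -ψ ξ ξ' z z' := fun ξ ξ' z z' => by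
    have h := LinearMap.congr_fun (LinearMap.congr_fun (hψalt (ξ + ξ')) z) z'
    simp only [map_add, LinearMap.add_apply, hψalt, LinearMap.zero_apply, zero_add,
      add_zero] at h
    linear_combination h
  have hWskew : ∀ x y, W y x = -W x y :=
    TensorProduct.apply_swap_eq_neg_of_tmul fun h v h' v' => by
      rw [hW, hW, hφsymm h h', ← LinearMap.IsAlt.neg (B := φ h' h) (hφalt h' h) v v']
  have hSskew : ∀ f g : Dual k (H ⊗[k] V), g (S f) = -f (S g) :=
    TensorProduct.dual_apply_swap_eq_neg_of_tmul fun ξ z ξ' z' => by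
      rw [hS, hS, hψskew, hψsymm]
  have hWS : W ∘ₗ S = 0 := LinearMap.comp_eq_zero_of_skew hWskew hSskew hcomp
  by_contra hψ
  obtain ⟨ξ, z, t, b, ht, hb, hξz⟩ := exists_contraction_eq_mul_of_finrank_eq_three
    (by rw [Subspace.dual_finrank_eq, hH]) ψ hψalt hψsymm hψ
  obtain ⟨h, rfl⟩ := (evalEquiv k H).surjective t
  obtain ⟨v, rfl⟩ := (evalEquiv k V).surjective b
  have hSξz : S (dualDistrib k H V (ξ ⊗ₜ z)) = h ⊗ₜ v :=
    TensorProduct.ext_of_dualDistrib_tmul fun ξ' z' => by rw [hS, hξz, dualDistrib_apply]; rfl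
  exact hnd h ((evalEquiv k H).map_ne_zero_iff.mp ht) v ((evalEquiv k V).map_ne_zero_iff.mp hb)
    (hSξz ▸ LinearMap.congr_fun hWS _)

/-- For `dim H = 3` and a nondegenerate `ω` of rank 8, every `σ ∈ Λ²H⊗S²V`
with `σ̃ ∘ ω̃ = 0` vanishes: smoothness of `MI(3)` (Ellingsrud–Strømme). -/
theorem statement12
    (k : Type) [Field k] [IsAlgClosed k] [CharZero k]
    (V H : Type) [AddCommGroup V] [Module k V] [AddCommGroup H] [Module k H]
    [FiniteDimensional k V] [FiniteDimensional k H]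
    (hV : finrank k V = 4) (hH : finrank k H = 3)
    (φ : H →ₗ[k] H →ₗ[k] V →ₗ[k] V →ₗ[k] k)
    (hφsymm : ∀ h h' : H, φ h h' = φ h' h)
    (hφalt : ∀ (h h' : H) (v : V), φ h h' v v = 0)
    (W : H ⊗[k] V →ₗ[k] Dual k (H ⊗[k] V))
    (hW : ∀ (h h' : H) (v v' : V), W (h ⊗ₜ v) (h' ⊗ₜ v') = φ h h' v v')
    (hrank : finrank k (LinearMap.range W) = 8)
    (hnd : ∀ h : H, h ≠ 0 → ∀ v : V, v ≠ 0 → W (h ⊗ₜ[k] v) ≠ 0)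
    (ψ : Dual k H →ₗ[k] Dual k H →ₗ[k] Dual k V →ₗ[k] Dual k V →ₗ[k] k)
    (hψalt : ∀ ξ : Dual k H, ψ ξ ξ = 0)
    (hψsymm : ∀ (ξ ξ' : Dual k H) (z z' : Dual k V), ψ ξ ξ' z z' = ψ ξ ξ' z' z)
    (S : Dual k (H ⊗[k] V) →ₗ[k] H ⊗[k] V)
    (hS : ∀ (ξ ξ' : Dual k H) (z z' : Dual k V),
      dualDistrib k H V (ξ' ⊗ₜ z') (S (dualDistrib k H V (ξ ⊗ₜ z))) = ψ ξ ξ' z z')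
    (hcomp : S ∘ₗ W = 0) :
    ψ = 0 :=
  statement12_general k V H hH φ hφsymm hφalt W hW hnd ψ hψalt hψsymm S hS hcomp
end

section
/- Let L₁₁, L₁₂, L₂₁, L₂₂ ⊆ V be lines with L₁₁ ∩ L₁₂ = 0 and L₂₁ ∩ L₂₂ = 0, such that L₂₁ ∩ L₁₁ and L₂₂ ∩ L₁₁ are 1-dimensional, spanned by vectors x₁ and x₂ respectively with ⟨x₁⟩ ≠ ⟨x₂⟩, and L₂₁ ∩ L₁₂ = L₂₂ ∩ L₁₂ = 0. Let L₃₁, L₃₂ ⊆ V be further lines with L₃₁ ∩ L₃₂ = 0, with x₁ ∉ L₃₁ ∪ L₃₂ and x₂ ∉ L₃₁ ∪ L₃₂, and assume it is not the case that both L₁₁ ∩ L₃₁ ≠ 0 and L₁₁ ∩ L₃₂ ≠ 0. For i = 1, 2, 3 let Q_i = {q ∈ S²V* : q vanishes on L_{i1} and on L_{i2}}. Then Q₁ + Q₂ + Q₃ = S²V*. -/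
/-!
Choose coordinates adapted to the first two pairs of lines: `V = L₁₁ ⊕ L₁₂` has a basis
`x₁, x₂, e₃, e₄` with `e₃, e₄ ∈ L₁₂`, `L₂₁ = ⟨x₁, x₂ + e₃⟩` and `L₂₂ = ⟨x₂, x₁ + e₄⟩`. A product
of a linear form vanishing on `L₂₁` with one vanishing on `L₂₂` lies in `Q₂`, and if `q` vanishes
at `x₁` and `x₂`, four such products combine to a `q₂ ∈ Q₂` agreeing with `q` on `L₁₁` and on
`L₁₂`, i.e. `q - q₂ ∈ Q₁`.

It remains to show that `Q₃` realises every pair of values `(q x₁, q x₂)`. Say `L₁₁` misses `L₃₁`.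
Then a linear form vanishing on `L₃₁` takes arbitrary values at `x₁, x₂`; multiplying such forms
by forms vanishing on `L₃₂` but not at `x₁` (resp. `x₂`) gives the required elements of `Q₃`.
-/

open Module

/-- The subspace of quadratic forms on `V` vanishing on a subset `S ⊆ V`. -/
def vanishingQuadrics (k V : Type) [Field k] [AddCommGroup V] [Module k V]
    (S : Set V) : Submodule k (QuadraticForm k V) where
  carrier := {q | ∀ x ∈ S, q x = 0}
  zero_mem' := by intro x hx; simp
  add_mem' := by
    intro a b ha hb x hx
    simp [ha x hx, hb x hx]
  smul_mem' := by
    intro c q hq x hx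
    simp [hq x hx]

section

variable {k V : Type} [Field k] [AddCommGroup V] [Module k V]

open Submodule QuadraticMap

theorem LinearIndependent.pair_of_mul_sub_mul_ne_zero (f g : V →ₗ[k] k) {u v : V}
    (h : f u * g v - f v * g u ≠ 0) : LinearIndependent k ![u, v] := by
  refine LinearIndependent.pair_iff.mpr fun s t hst ↦ ?_
  have hf : s * f u + t * f v = 0 := by simpa using congr(f $hst)
  have hg : s * g u + t * g v = 0 := by simpa using congr(g $hst)
  constructor
  · refine (mul_eq_zero.mp ?_).resolve_right h
    linear_combination g v * hf - f v * hg
  · refine (mul_eq_zero.mp ?_).resolve_right h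
    linear_combination f u * hg - g u * hf

theorem linearIndependent_pair_of_span_singleton_ne {x y : V} (hx : x ≠ 0) (hy : y ≠ 0)
    (h : span k {x} ≠ span k {y}) : LinearIndependent k ![x, y] := by
  refine (LinearIndependent.pair_iff' hx).mpr fun a hax ↦ h ?_
  have ha : a ≠ 0 := by rintro rfl; exact hy (by simp [← hax])
  rw [← hax, span_singleton_smul_eq (IsUnit.mk0 a ha)]

theorem exists_add_mem_of_sup_eq_top {A B : Submodule k V} (h : A ⊔ B = ⊤) (x : V) :
    ∃ e ∈ B, x + e ∈ A := by
  obtain ⟨y, hy, z, hz, rfl⟩ := mem_sup.mp (h ▸ mem_top : x ∈ A ⊔ B)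
  exact ⟨-z, neg_mem hz, by simpa using hy⟩

theorem LinearIndependent.exists_linearMap_apply_eq {ι : Type*} {v : ι → V}
    (hv : LinearIndependent k v) (c : ι → k) : ∃ f : V →ₗ[k] k, ∀ i, f (v i) = c i := by
  obtain ⟨f, hf⟩ := LinearMap.exists_extend (Finsupp.linearCombination k c ∘ₗ hv.repr)
  refine ⟨f, fun i ↦ ?_⟩
  have := congr($hf ⟨v i, subset_span ⟨i, rfl⟩⟩)
  simp only [LinearMap.comp_apply, subtype_apply,
    hv.repr_eq_single i ⟨v i, subset_span ⟨i, rfl⟩⟩ rfl] at this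
  simpa using this

theorem Submodule.exists_le_ker_of_linearIndependent_mkQ {ι : Type*} {W : Submodule k V}
    {v : ι → V} (hv : LinearIndependent k (W.mkQ ∘ v)) (c : ι → k) :
    ∃ f : V →ₗ[k] k, W ≤ LinearMap.ker f ∧ ∀ i, f (v i) = c i := by
  obtain ⟨f, hf⟩ := hv.exists_linearMap_apply_eq c
  exact ⟨f ∘ₗ W.mkQ, fun w hw ↦ by simp [(Quotient.mk_eq_zero W).mpr hw], hf⟩

theorem vanishingQuadrics_union (S T : Set V) :
    vanishingQuadrics k V (S ∪ T) = vanishingQuadrics k V S ⊓ vanishingQuadrics k V T := by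
  ext q
  simp only [mem_inf]
  exact ⟨fun h ↦ ⟨fun x hx ↦ h x (.inl hx), fun x hx ↦ h x (.inr hx)⟩,
    fun h x hx ↦ hx.elim (h.1 x) (h.2 x)⟩

theorem linMulLin_mem_vanishingQuadrics_union {f g : V →ₗ[k] k} {A B : Submodule k V}
    (hf : A ≤ LinearMap.ker f) (hg : B ≤ LinearMap.ker g) :
    linMulLin f g ∈ vanishingQuadrics k V ((A : Set V) ∪ B) := by
  rintro x (hx | hx)
  · simp [linMulLin_apply, LinearMap.mem_ker.mp (hf hx)]
  · simp [linMulLin_apply, LinearMap.mem_ker.mp (hg hx)]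

theorem mem_vanishingQuadrics_span_pair_iff {q : QuadraticForm k V} {u v : V} :
    q ∈ vanishingQuadrics k V (span k {u, v}) ↔ q u = 0 ∧ q v = 0 ∧ polar q u v = 0 := by
  refine ⟨fun h ↦ ?_, fun ⟨hu, hv, huv⟩ x hx ↦ ?_⟩
  · have hu := h u (subset_span (by simp))
    have hv := h v (subset_span (by simp))
    have huv := h (u + v) (add_mem (subset_span (by simp)) (subset_span (by simp)))
    exact ⟨hu, hv, by simp [polar, hu, hv, huv]⟩
  · obtain ⟨s, t, rfl⟩ := mem_span_pair.mp hx
    rw [QuadraticMap.map_add q, QuadraticMap.map_smul, QuadraticMap.map_smul, polar_smul_left,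
      polar_smul_right, hu, hv, huv]
    simp

theorem exists_mem_vanishingQuadrics_union_apply_eq {A B : Submodule k V} {x₁ x₂ : V}
    (hx : LinearIndependent k ![x₁, x₂]) (hA : span k {x₁, x₂} ⊓ A = ⊥)
    (h₁ : x₁ ∉ B) (h₂ : x₂ ∉ B) (c₁ c₂ : k) :
    ∃ q ∈ vanishingQuadrics k V ((A : Set V) ∪ B), q x₁ = c₁ ∧ q x₂ = c₂ := by
  have hxA : LinearIndependent k (A.mkQ ∘ ![x₁, x₂]) := hx.map <| by
    rwa [Matrix.range_cons_cons_empty, ker_mkQ, disjoint_iff]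
  obtain ⟨g₁, hg₁, hBg₁⟩ := B.exists_le_ker_of_notMem h₁
  obtain ⟨g₂, hg₂, hBg₂⟩ := B.exists_le_ker_of_notMem h₂
  obtain ⟨f₁, hAf₁, hf₁⟩ := A.exists_le_ker_of_linearIndependent_mkQ hxA ![c₁ / g₁ x₁, 0]
  obtain ⟨f₂, hAf₂, hf₂⟩ := A.exists_le_ker_of_linearIndependent_mkQ hxA ![0, c₂ / g₂ x₂]
  simp only [Fin.forall_fin_two, Matrix.cons_val_zero, Matrix.cons_val_one] at hf₁ hf₂
  refine ⟨linMulLin f₁ g₁ + linMulLin f₂ g₂,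
    add_mem (linMulLin_mem_vanishingQuadrics_union hAf₁ hBg₁)
      (linMulLin_mem_vanishingQuadrics_union hAf₂ hBg₂), ?_, ?_⟩
  · simp [linMulLin_apply, hf₁, hf₂, hg₁]
  · simp [linMulLin_apply, hf₁, hf₂, hg₂]

theorem mem_sup_vanishingQuadrics_of_apply_eq_zero (b : Basis (Fin 4) k V)
    {q : QuadraticForm k V} (h₀ : q (b 0) = 0) (h₁ : q (b 1) = 0) :
    q ∈ vanishingQuadrics k V (span k {b 0, b 1} ∪ span k {b 2, b 3}) ⊔
      vanishingQuadrics k V (span k {b 0, b 1 + b 2} ∪ span k {b 1, b 0 + b 3}) := by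
  set X := b.coord
  set a := polar q (b 0) (b 1)
  set d := polar q (b 2) (b 3)
  -- `X 1 - X 2, X 3` cut out `span {b 0, b 1 + b 2}` and `X 0 - X 3, X 2` cut out
  -- `span {b 1, b 0 + b 3}`; the coefficients make `q₂` agree with `q` on the other two lines.
  set q₂ : QuadraticForm k V := a • linMulLin (X 1 - X 2) (X 0 - X 3)
    - q (b 2) • linMulLin (X 1 - X 2) (X 2) - q (b 3) • linMulLin (X 3) (X 0 - X 3)
    + (d - a) • linMulLin (X 3) (X 2)
  have hq₂ :
      q₂ ∈ vanishingQuadrics k V (span k {b 0, b 1 + b 2} ∪ span k {b 1, b 0 + b 3}) := by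
    refine add_mem (sub_mem (sub_mem (smul_mem _ _ ?_) (smul_mem _ _ ?_)) (smul_mem _ _ ?_))
      (smul_mem _ _ ?_) <;>
    refine linMulLin_mem_vanishingQuadrics_union ?_ ?_ <;>
    simp [span_le, Set.insert_subset_iff, X, Basis.coord_apply]
  have hq₁ : q - q₂ ∈ vanishingQuadrics k V (span k {b 0, b 1} ∪ span k {b 2, b 3}) := by
    rw [vanishingQuadrics_union, mem_inf, mem_vanishingQuadrics_span_pair_iff,
      mem_vanishingQuadrics_span_pair_iff]
    simp [q₂, X, a, d, polar, Basis.coord_apply, linMulLin_apply, h₀, h₁]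
    ring
  simpa using add_mem_sup hq₁ hq₂

theorem linearIndependent_pair_of_add_mem {L₁₁ L₁₂ L₂₁ L₂₂ : Submodule k V}
    (hskew1 : L₁₁ ⊓ L₁₂ = ⊥) (hskew2 : L₂₁ ⊓ L₂₂ = ⊥) {x₁ x₂ e₃ e₄ : V}
    (hx : LinearIndependent k ![x₁, x₂]) (hx₁ : x₁ ∈ L₂₁ ⊓ L₁₁) (hx₂ : x₂ ∈ L₂₂ ⊓ L₁₁)
    (he₃ : e₃ ∈ L₁₂) (hx₂e₃ : x₂ + e₃ ∈ L₂₁) (hx₁e₄ : x₁ + e₄ ∈ L₂₂) :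
    LinearIndependent k ![e₃, e₄] := by
  refine LinearIndependent.pair_iff.mpr fun s t hst ↦ ?_
  have h₂ : s • (x₂ + e₃) - t • x₁ ∈ L₂₁ ⊓ L₂₂ := by
    refine ⟨sub_mem (smul_mem _ _ hx₂e₃) (smul_mem _ _ hx₁.1), ?_⟩
    rw [show s • (x₂ + e₃) - t • x₁ = s • x₂ - t • (x₁ + e₄) by
      linear_combination (norm := module) hst]
    exact sub_mem (smul_mem _ _ hx₂.1) (smul_mem _ _ hx₁e₄)
  rw [hskew2, mem_bot] at h₂
  have h₁ : s • x₂ - t • x₁ ∈ L₁₁ ⊓ L₁₂ := by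
    refine ⟨sub_mem (smul_mem _ _ hx₂.2) (smul_mem _ _ hx₁.2), ?_⟩
    rw [show s • x₂ - t • x₁ = -(s • e₃) by linear_combination (norm := module) h₂]
    exact neg_mem (smul_mem _ _ he₃)
  rw [hskew1, mem_bot] at h₁
  have := LinearIndependent.pair_iff.mp hx (-t) s (by linear_combination (norm := module) h₁)
  exact ⟨this.2, neg_eq_zero.mp this.1⟩

variable [FiniteDimensional k V]

theorem sup_eq_top_of_finrank_add_eq {A B : Submodule k V}
    (h : finrank k A + finrank k B = finrank k V) (hAB : A ⊓ B = ⊥) : A ⊔ B = ⊤ := by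
  refine eq_top_of_finrank_eq ?_
  have := finrank_sup_add_finrank_inf_eq A B
  rw [hAB, finrank_bot] at this
  omega

theorem span_pair_eq_of_finrank_eq_two {W : Submodule k V} (hW : finrank k W = 2) {u v : V}
    (hu : u ∈ W) (hv : v ∈ W) (huv : LinearIndependent k ![u, v]) : span k {u, v} = W := by
  refine eq_of_le_of_finrank_eq (span_le.mpr (Set.insert_subset hu (by simpa using hv))) ?_
  rw [hW, ← Matrix.range_cons_cons_empty u v ![], finrank_span_eq_card huv, Fintype.card_fin]

theorem exists_basis_adapted (hV : finrank k V = 4) {L₁₁ L₁₂ L₂₁ L₂₂ : Submodule k V}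
    (h11 : finrank k L₁₁ = 2) (h12 : finrank k L₁₂ = 2)
    (h21 : finrank k L₂₁ = 2) (h22 : finrank k L₂₂ = 2)
    (hskew1 : L₁₁ ⊓ L₁₂ = ⊥) (hskew2 : L₂₁ ⊓ L₂₂ = ⊥)
    (hn1 : L₂₁ ⊓ L₁₂ = ⊥) (hn2 : L₂₂ ⊓ L₁₂ = ⊥) {x₁ x₂ : V}
    (hx : LinearIndependent k ![x₁, x₂]) (hx₁ : x₁ ∈ L₂₁ ⊓ L₁₁) (hx₂ : x₂ ∈ L₂₂ ⊓ L₁₁) :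
    ∃ b : Basis (Fin 4) k V, b 0 = x₁ ∧ b 1 = x₂ ∧
      L₁₁ = span k {b 0, b 1} ∧ L₁₂ = span k {b 2, b 3} ∧
      L₂₁ = span k {b 0, b 1 + b 2} ∧ L₂₂ = span k {b 1, b 0 + b 3} := by
  have hsup {A B : Submodule k V} (hA : finrank k A = 2) (hB : finrank k B = 2)
      (hAB : A ⊓ B = ⊥) : A ⊔ B = ⊤ :=
    sup_eq_top_of_finrank_add_eq (by omega) hAB
  obtain ⟨e₃, he₃, hx₂e₃⟩ := exists_add_mem_of_sup_eq_top (hsup h21 h12 hn1) x₂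
  obtain ⟨e₄, he₄, hx₁e₄⟩ := exists_add_mem_of_sup_eq_top (hsup h22 h12 hn2) x₁
  have hL11 := span_pair_eq_of_finrank_eq_two h11 hx₁.2 hx₂.2 hx
  have hL12 := span_pair_eq_of_finrank_eq_two h12 he₃ he₄
    (linearIndependent_pair_of_add_mem hskew1 hskew2 hx hx₁ hx₂ he₃ hx₂e₃ hx₁e₄)
  set v : Fin 4 → V := ![x₁, x₂, e₃, e₄]
  have hv : ⊤ ≤ span k (Set.range v) := by
    rw [← hsup h11 h12 hskew1, ← hL11, ← hL12, sup_le_iff]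
    exact ⟨span_mono (by simp [v, Set.insert_subset_iff]),
      span_mono (by simp [v, Set.insert_subset_iff])⟩
  set b := basisOfTopLeSpanOfCardEqFinrank v hv (by simp [hV])
  have hb : ⇑b = v := coe_basisOfTopLeSpanOfCardEqFinrank v hv _
  refine ⟨b, by simp [hb, v], by simp [hb, v], by simpa [hb, v] using hL11.symm,
    by simpa [hb, v] using hL12.symm, ?_, ?_⟩
  · refine (span_pair_eq_of_finrank_eq_two h21 ?_ ?_
      (.pair_of_mul_sub_mul_ne_zero (b.coord 0) (b.coord 1) ?_)).symm
    · simpa [hb, v] using hx₁.1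
    · simpa [hb, v] using hx₂e₃
    · simp [Basis.coord_apply]
  · refine (span_pair_eq_of_finrank_eq_two h22 ?_ ?_
      (.pair_of_mul_sub_mul_ne_zero (b.coord 1) (b.coord 0) ?_)).symm
    · simpa [hb, v] using hx₂.1
    · simpa [hb, v] using hx₁e₄
    · simp [Basis.coord_apply]

end

theorem statement18_general
    (k V : Type) [Field k] [AddCommGroup V] [Module k V] [FiniteDimensional k V]
    (hV : finrank k V = 4)
    (L₁₁ L₁₂ L₂₁ L₂₂ L₃₁ L₃₂ : Submodule k V)
    (h11 : finrank k L₁₁ = 2) (h12 : finrank k L₁₂ = 2)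
    (h21 : finrank k L₂₁ = 2) (h22 : finrank k L₂₂ = 2)
    (hskew1 : L₁₁ ⊓ L₁₂ = ⊥) (hskew2 : L₂₁ ⊓ L₂₂ = ⊥)
    (x₁ x₂ : V) (hx₁ : x₁ ≠ 0) (hx₂ : x₂ ≠ 0)
    (hm1 : L₂₁ ⊓ L₁₁ = Submodule.span k {x₁})
    (hm2 : L₂₂ ⊓ L₁₁ = Submodule.span k {x₂})
    (hxx : Submodule.span k {x₁} ≠ Submodule.span k ({x₂} : Set V))
    (hn1 : L₂₁ ⊓ L₁₂ = ⊥) (hn2 : L₂₂ ⊓ L₁₂ = ⊥)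
    (hx₁31 : x₁ ∉ L₃₁) (hx₁32 : x₁ ∉ L₃₂) (hx₂31 : x₂ ∉ L₃₁) (hx₂32 : x₂ ∉ L₃₂)
    (hnotboth : ¬(L₁₁ ⊓ L₃₁ ≠ ⊥ ∧ L₁₁ ⊓ L₃₂ ≠ ⊥)) :
    vanishingQuadrics k V ((L₁₁ : Set V) ∪ (L₁₂ : Set V)) ⊔
      vanishingQuadrics k V ((L₂₁ : Set V) ∪ (L₂₂ : Set V)) ⊔
      vanishingQuadrics k V ((L₃₁ : Set V) ∪ (L₃₂ : Set V)) = ⊤ := by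
  have hx := linearIndependent_pair_of_span_singleton_ne hx₁ hx₂ hxx
  obtain ⟨b, rfl, rfl, rfl, rfl, rfl, rfl⟩ :=
    exists_basis_adapted hV h11 h12 h21 h22 hskew1 hskew2 hn1 hn2 hx
      (by rw [hm1]; exact Submodule.mem_span_singleton_self _)
      (by rw [hm2]; exact Submodule.mem_span_singleton_self _)
  refine eq_top_iff.mpr fun q _ ↦ ?_
  obtain ⟨q₃, hq₃, h₀, h₁⟩ : ∃ q₃ ∈ vanishingQuadrics k V ((L₃₁ : Set V) ∪ L₃₂),
      q₃ (b 0) = q (b 0) ∧ q₃ (b 1) = q (b 1) := by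
    rcases not_and_or.mp hnotboth with h | h <;> rw [not_ne_iff] at h
    · exact exists_mem_vanishingQuadrics_union_apply_eq hx h hx₁32 hx₂32 _ _
    · simpa only [Set.union_comm] using
        exists_mem_vanishingQuadrics_union_apply_eq hx h hx₁31 hx₂31 _ _
  have hq := mem_sup_vanishingQuadrics_of_apply_eq_zero b (q := q - q₃) (by simp [h₀])
    (by simp [h₁])
  simpa using Submodule.add_mem_sup hq hq₃

/-- with lines `L₁₁, L₁₂, L₂₁, L₂₂` configured as in the paper's
Lemma 3(ii) (intersection points `x₁, x₂` on `L₁₁ = span(x₁,x₂)`), and further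
skew lines `L₃₁, L₃₂` avoiding `x₁, x₂` such that `L₁₁` does not meet both
`L₃₁` and `L₃₂`, the spaces `Q_i` of quadrics vanishing on `L_{i1} ∪ L_{i2}`
satisfy `Q₁ + Q₂ + Q₃ = S²V*`. -/
theorem statement18
    (k V : Type) [Field k] [IsAlgClosed k] [CharZero k]
    [AddCommGroup V] [Module k V] [FiniteDimensional k V]
    (hV : finrank k V = 4)
    (L₁₁ L₁₂ L₂₁ L₂₂ L₃₁ L₃₂ : Submodule k V)
    (h11 : finrank k L₁₁ = 2) (h12 : finrank k L₁₂ = 2)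
    (h21 : finrank k L₂₁ = 2) (h22 : finrank k L₂₂ = 2)
    (h31 : finrank k L₃₁ = 2) (h32 : finrank k L₃₂ = 2)
    (hskew1 : L₁₁ ⊓ L₁₂ = ⊥) (hskew2 : L₂₁ ⊓ L₂₂ = ⊥) (hskew3 : L₃₁ ⊓ L₃₂ = ⊥)
    (x₁ x₂ : V) (hx₁ : x₁ ≠ 0) (hx₂ : x₂ ≠ 0)
    (hm1 : L₂₁ ⊓ L₁₁ = Submodule.span k {x₁})
    (hm2 : L₂₂ ⊓ L₁₁ = Submodule.span k {x₂})
    (hxx : Submodule.span k {x₁} ≠ Submodule.span k ({x₂} : Set V))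
    (hn1 : L₂₁ ⊓ L₁₂ = ⊥) (hn2 : L₂₂ ⊓ L₁₂ = ⊥)
    (hx₁31 : x₁ ∉ L₃₁) (hx₁32 : x₁ ∉ L₃₂) (hx₂31 : x₂ ∉ L₃₁) (hx₂32 : x₂ ∉ L₃₂)
    (hnotboth : ¬(L₁₁ ⊓ L₃₁ ≠ ⊥ ∧ L₁₁ ⊓ L₃₂ ≠ ⊥)) :
    vanishingQuadrics k V ((L₁₁ : Set V) ∪ (L₁₂ : Set V)) ⊔
      vanishingQuadrics k V ((L₂₁ : Set V) ∪ (L₂₂ : Set V)) ⊔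
      vanishingQuadrics k V ((L₃₁ : Set V) ∪ (L₃₂ : Set V)) = ⊤ :=
  statement18_general k V hV L₁₁ L₁₂ L₂₁ L₂₂ L₃₁ L₃₂ h11 h12 h21 h22 hskew1 hskew2 x₁ x₂ hx₁ hx₂ hm1
    hm2 hxx hn1 hn2 hx₁31 hx₁32 hx₂31 hx₂32 hnotboth
end
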